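/- arXiv:math/0001055 — 6 statements merged into one kernel-verified Lean document; each statement's English description precedes it below -/
import Mathlib

section
/- If x is a left-modular element of a lattice L, then for any y ∈ L, the meet x ∧ y is a left-modular element of the interval sublattice [⊥, y]. -/
/-- An element `x` of a lattice is left-modular if for all `u < v`,
`u ⊔ (x ⊓ v) = (u ⊔ x) ⊓ v`. -/
def LeftModular {L : Type*} [Lattice L] (x : L) : Prop :=
  ∀ u v : L, u < v → u ⊔ (x ⊓ v) = (u ⊔ x) ⊓ v

/-- If x is a left-modular element of a lattice L, then for any y ∈ L,
the meet x ∧ y is a left-modular element of the interval sublattice [⊥, y]: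
for all a, b ∈ [⊥, y] with b < a, b ∨ ((x ∧ y) ∧ a) = (b ∨ (x ∧ y)) ∧ a. -/
theorem leftModular_inf {L : Type*} [Lattice L] [OrderBot L] (x : L)
    (hx : LeftModular x) (y : L) :
    ∀ a b : L, a ≤ y → b ≤ y → b < a → b ⊔ ((x ⊓ y) ⊓ a) = (b ⊔ (x ⊓ y)) ⊓ a := by
  intro a b ha hb hba
  have hby : b < y := lt_of_lt_of_le hba ha
  have hya : y ⊓ a = a := inf_eq_right.mpr ha
  rw [inf_assoc, hya, hx b a hba, hx b y hby, inf_assoc, hya]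
end

section
/- If x is a left-modular element of a lattice L, then for any y ∈ L, the join x ∨ y is a left-modular element of the interval sublattice [y, ⊤]. -/
/-- If x is a left-modular element of a lattice L, then for any y ∈ L,
the join x ∨ y is a left-modular element of the interval sublattice [y, ⊤]:
for all a, b ∈ [y, ⊤] with b < a, b ∨ ((x ∨ y) ∧ a) = (b ∨ (x ∨ y)) ∧ a. -/
theorem leftModular_sup {L : Type*} [Lattice L] [OrderTop L] (x : L)
    (hx : LeftModular x) (y : L) :
    ∀ a b : L, y ≤ a → y ≤ b → b < a → b ⊔ ((x ⊔ y) ⊓ a) = (b ⊔ (x ⊔ y)) ⊓ a := by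
  intro a b hya hyb hba
  have h := hx b a hba
  have hbx : b ⊔ (x ⊔ y) = b ⊔ x := by
    rw [← sup_assoc, sup_comm b x, sup_assoc, sup_of_le_left hyb]
  rw [hbx]
  apply le_antisymm
  · have h1 : (x ⊔ y) ⊓ a ≤ (x ⊔ b) ⊓ a :=
      inf_le_inf_right a (sup_le_sup_left hyb x)
    calc b ⊔ ((x ⊔ y) ⊓ a) ≤ b ⊔ ((x ⊔ b) ⊓ a) := sup_le_sup_left h1 b
      _ = (b ⊔ x) ⊓ a := by rw [sup_comm x b, ← h,
        ← sup_assoc, sup_idem]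
  · calc (b ⊔ x) ⊓ a = b ⊔ (x ⊓ a) := h.symm
      _ ≤ b ⊔ ((x ⊔ y) ⊓ a) := sup_le_sup_left (inf_le_inf_right a le_sup_left) b
end

section
/- Let L be a finite lattice, r : L → ℝ an arbitrary function, n ∈ ℝ, and x ∈ L a left-modular element. Then the sum over all y ∈ L of μ(⊥,y)·t^{n−r(y)} equals the sum over all b ∈ L with b ∧ x = ⊥ of μ(⊥,b) times the sum over y ∈ [b, b ∨ x] of μ(b,y)·t^{n−r(y)}, as polynomials (or real functions) in t. -/
open scoped Classical

set_option linter.unusedSectionVars false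
set_option linter.unusedVariables false

section Aux
variable {L : Type*} [Lattice L] [Fintype L] [OrderBot L] (mu : L → L → ℤ)

lemma aux_sum_le
    (hmu : ∀ a b : L, a ≤ b →
      (∑ c ∈ Finset.univ.filter (fun c => a ≤ c ∧ c ≤ b), mu a c) =
        if a = b then 1 else 0) (z : L) :
    (∑ c ∈ Finset.univ.filter (fun c => c ≤ z), mu ⊥ c) = if (⊥:L) = z then 1 else 0 := by
  simpa using hmu ⊥ z bot_le

lemma aux_split (z : L) :
    Finset.univ.filter (fun u : L => u ≤ z)
      = insert z (Finset.univ.filter (fun u : L => u < z)) := by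
  ext u
  simp [le_iff_lt_or_eq, or_comm]

lemma aux_key
    (hmu : ∀ a b : L, a ≤ b →
      (∑ c ∈ Finset.univ.filter (fun c => a ≤ c ∧ c ≤ b), mu a c) =
        if a = b then 1 else 0)
    (x : L) (hx : LeftModular x) (y : L) :
    (∑ b ∈ Finset.univ.filter (fun b : L => b ⊓ x = ⊥ ∧ b ≤ y ∧ y ≤ b ⊔ x),
      mu ⊥ b * mu b y) = mu ⊥ y := by
  set g : L → ℤ := fun w =>
    ∑ b ∈ Finset.univ.filter (fun b : L => b ⊓ x = ⊥ ∧ b ≤ w ∧ w ≤ b ⊔ x),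
      mu ⊥ b * mu b w with hg
  -- key: partial sums of g agree with those of mu ⊥ ·
  have key : ∀ z : L, (∑ u ∈ Finset.univ.filter (fun u : L => u ≤ z), g u)
      = if (⊥:L) = z then 1 else 0 := by
    intro z
    have step1 : (∑ u ∈ Finset.univ.filter (fun u : L => u ≤ z), g u)
        = ∑ b : L, ∑ u ∈ Finset.univ.filter (fun u : L => u ≤ z),
            (if b ⊓ x = ⊥ ∧ b ≤ u ∧ u ≤ b ⊔ x then mu ⊥ b * mu b u else 0) := by
      rw [Finset.sum_comm]
      refine Finset.sum_congr rfl ?_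
      intro u _
      exact Finset.sum_filter _ _
    rw [step1]
    have step2 : ∀ b : L,
        (∑ u ∈ Finset.univ.filter (fun u : L => u ≤ z),
            (if b ⊓ x = ⊥ ∧ b ≤ u ∧ u ≤ b ⊔ x then mu ⊥ b * mu b u else 0))
        = if x ⊓ z = ⊥ ∧ b ≤ z then mu ⊥ b else 0 := by
      intro b
      by_cases hbx : b ⊓ x = ⊥
      · by_cases hbz : b ≤ z
        · -- main case
          have hrw : (∑ u ∈ Finset.univ.filter (fun u : L => u ≤ z),
              (if b ⊓ x = ⊥ ∧ b ≤ u ∧ u ≤ b ⊔ x then mu ⊥ b * mu b u else 0))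
              = mu ⊥ b * ∑ u ∈ Finset.univ.filter
                  (fun u : L => b ≤ u ∧ u ≤ (b ⊔ x) ⊓ z), mu b u := by
            rw [Finset.mul_sum, ← Finset.sum_filter, Finset.filter_filter]
            refine Finset.sum_congr ?_ (fun _ _ => rfl)
            ext u
            simp only [Finset.mem_filter, Finset.mem_univ, true_and, le_inf_iff, hbx]
            tauto
          rw [hrw, hmu b ((b ⊔ x) ⊓ z) (le_inf le_sup_left hbz)]
          have hiff : b = (b ⊔ x) ⊓ z ↔ x ⊓ z = ⊥ := by
            rcases eq_or_lt_of_le hbz with h | h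
            · subst h
              constructor
              · intro _
                rw [inf_comm]
                exact hbx
              · intro _
                exact (inf_eq_right.mpr le_sup_left).symm
            · rw [← hx b z h]
              constructor
              · intro he
                have h1 : x ⊓ z ≤ b := by
                  conv_rhs => rw [he]
                  exact le_sup_right
                have : x ⊓ z ≤ b ⊓ x := le_inf h1 inf_le_left
                exact le_bot_iff.mp (hbx ▸ this)
              · intro he
                rw [he, sup_bot_eq]
          simp only [hiff]
          by_cases hxz : x ⊓ z = ⊥ <;> simp [hxz, hbz]
        · -- b not ≤ z : both sides zero
          rw [Finset.sum_eq_zero, eq_comm, if_neg]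
          · rintro ⟨-, h⟩; exact hbz h
          · intro u hu
            simp only [Finset.mem_filter, Finset.mem_univ, true_and] at hu
            rw [if_neg]
            rintro ⟨-, hbu, -⟩
            exact hbz (hbu.trans hu)
      · rw [Finset.sum_eq_zero, eq_comm, if_neg]
        · rintro ⟨hxz, hbz⟩
          have hle : b ⊓ x ≤ x ⊓ z := le_inf inf_le_right (inf_le_left.trans hbz)
          exact hbx (le_bot_iff.mp (hxz ▸ hle))
        · intro u _
          rw [if_neg]
          rintro ⟨h, -⟩; exact hbx h
    calc (∑ b : L, ∑ u ∈ Finset.univ.filter (fun u : L => u ≤ z),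
            (if b ⊓ x = ⊥ ∧ b ≤ u ∧ u ≤ b ⊔ x then mu ⊥ b * mu b u else 0))
        = ∑ b : L, (if x ⊓ z = ⊥ ∧ b ≤ z then mu ⊥ b else 0) :=
          Finset.sum_congr rfl (fun b _ => step2 b)
      _ = if (⊥:L) = z then 1 else 0 := by
          by_cases hxz : x ⊓ z = ⊥
          · simp only [hxz, true_and, ← Finset.sum_filter]
            exact aux_sum_le mu hmu z
          · simp only [hxz, false_and, if_false, Finset.sum_const_zero, eq_comm (a := (0:ℤ))]
            rw [if_neg]
            intro hz
            exact hxz (by rw [← hz]; simp)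
  -- induction to conclude g = mu ⊥ ·
  haveI : WellFoundedLT L := Finite.to_wellFoundedLT
  have main : ∀ w : L, g w = mu ⊥ w := by
    intro w
    induction w using WellFoundedLT.induction with
    | _ w ih =>
      have h1 := key w
      have h2 := aux_sum_le mu hmu w
      rw [aux_split] at h1 h2
      have hz : w ∉ Finset.univ.filter (fun u : L => u < w) := by simp
      rw [Finset.sum_insert hz] at h1 h2
      have hsum : (∑ u ∈ Finset.univ.filter (fun u : L => u < w), g u)
          = ∑ u ∈ Finset.univ.filter (fun u : L => u < w), mu ⊥ u := by
        refine Finset.sum_congr rfl ?_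
        intro u hu
        simp only [Finset.mem_filter, Finset.mem_univ, true_and] at hu
        exact ih u hu
      rw [hsum] at h1
      omega
  exact main y

end Aux

/-- Let L be a finite lattice, r : L → ℝ an arbitrary function, n ∈ ℝ,
and x ∈ L a left-modular element.  Then
  Σ_{y ∈ L} μ(⊥,y) t^{n−r(y)}
    = Σ_{b : b ∧ x = ⊥} μ(⊥,b) Σ_{y ∈ [b, b∨x]} μ(b,y) t^{n−r(y)}
as real functions of t > 0.  Here `mu` is the Möbius function of L, characterized by
Σ_{a ≤ c ≤ b} μ(a,c) = δ_{a,b}. -/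
theorem leftModular_char_sum {L : Type*} [Lattice L] [Fintype L] [OrderBot L]
    (mu : L → L → ℤ)
    (hmu : ∀ a b : L, a ≤ b →
      (∑ c ∈ Finset.univ.filter (fun c => a ≤ c ∧ c ≤ b), mu a c) =
        if a = b then 1 else 0)
    (r : L → ℝ) (n : ℝ) (x : L) (hx : LeftModular x) (t : ℝ) (ht : 0 < t) :
    ∑ y : L, (mu ⊥ y : ℝ) * t ^ (n - r y)
      = ∑ b ∈ Finset.univ.filter (fun b : L => b ⊓ x = ⊥),
          (mu ⊥ b : ℝ) *
            ∑ y ∈ Finset.univ.filter (fun y : L => b ≤ y ∧ y ≤ b ⊔ x),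
              (mu b y : ℝ) * t ^ (n - r y) := by
  have keyR : ∀ y : L,
      (∑ b ∈ Finset.univ.filter (fun b : L => b ⊓ x = ⊥ ∧ b ≤ y ∧ y ≤ b ⊔ x),
        (mu ⊥ b : ℝ) * (mu b y : ℝ)) = (mu ⊥ y : ℝ) := by
    intro y
    exact_mod_cast aux_key mu hmu x hx y
  calc ∑ y : L, (mu ⊥ y : ℝ) * t ^ (n - r y)
      = ∑ y : L,
          (∑ b ∈ Finset.univ.filter (fun b : L => b ⊓ x = ⊥ ∧ b ≤ y ∧ y ≤ b ⊔ x),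
            (mu ⊥ b : ℝ) * (mu b y : ℝ)) * t ^ (n - r y) := by
        refine Finset.sum_congr rfl fun y _ => ?_
        rw [keyR y]
    _ = ∑ y : L, ∑ b : L,
          (if b ⊓ x = ⊥ ∧ b ≤ y ∧ y ≤ b ⊔ x then
            (mu ⊥ b : ℝ) * (mu b y : ℝ) * t ^ (n - r y) else 0) := by
        refine Finset.sum_congr rfl fun y _ => ?_
        rw [Finset.sum_mul, Finset.sum_filter]
    _ = ∑ b : L, ∑ y : L,
          (if b ⊓ x = ⊥ ∧ b ≤ y ∧ y ≤ b ⊔ x then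
            (mu ⊥ b : ℝ) * (mu b y : ℝ) * t ^ (n - r y) else 0) := Finset.sum_comm
    _ = ∑ b ∈ Finset.univ.filter (fun b : L => b ⊓ x = ⊥),
          (mu ⊥ b : ℝ) *
            ∑ y ∈ Finset.univ.filter (fun y : L => b ≤ y ∧ y ≤ b ⊔ x),
              (mu b y : ℝ) * t ^ (n - r y) := by
        rw [Finset.sum_filter]
        refine Finset.sum_congr rfl fun b _ => ?_
        by_cases hb : b ⊓ x = ⊥
        · simp only [hb, true_and, if_true]
          rw [Finset.mul_sum, Finset.sum_filter]
          refine Finset.sum_congr rfl fun y _ => ?_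
          by_cases hq : b ≤ y ∧ y ≤ b ⊔ x <;> simp [hq, mul_assoc]
        · simp [hb]
end

section
/- Let L be a finite lattice and x ∈ L left-modular. Then μ(⊥,⊤) = Σ_b μ(⊥,b)·μ(b,⊤), where the sum is over all b ∈ L with b ∧ x = ⊥ and b ∨ x = ⊤. -/
open scoped Classical

set_option linter.unusedSectionVars false

section Aux

variable {L : Type*} [Lattice L] [Fintype L] [BoundedOrder L]
    (mu : L → L → ℤ)
    (hmu : ∀ a b : L, a ≤ b →
      (∑ c ∈ Finset.univ.filter (fun c => a ≤ c ∧ c ≤ b), mu a c) =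
        if a = b then 1 else 0)

include hmu

/-- The defining relation of `mu`, in "ite" form, valid for all pairs. -/
lemma mu_left_ite (a b : L) :
    (∑ c : L, if a ≤ c ∧ c ≤ b then mu a c else 0) = if a = b then 1 else 0 := by
  rw [← Finset.sum_filter]
  by_cases h : a ≤ b
  · exact hmu a b h
  · rw [Finset.filter_false_of_mem, Finset.sum_empty, if_neg (fun hab => h (le_of_eq hab))]
    intro c _ hc
    exact h (hc.1.trans hc.2)

/-- The dual relation: summing `mu · b` over the interval `[a,b]` also gives `δ a b`. -/
lemma mu_dual (a b : L) :
    (∑ c : L, if a ≤ c ∧ c ≤ b then mu c b else 0) = if a = b then 1 else 0 := by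
  classical
  set M : Matrix L L ℤ := fun p q => if p ≤ q then mu p q else 0 with hM
  set Z : Matrix L L ℤ := fun p q => if p ≤ q then 1 else 0 with hZ
  have hMZ : M * Z = 1 := by
    ext p q
    rw [Matrix.mul_apply, Matrix.one_apply]
    rw [← mu_left_ite mu hmu p q]
    apply Finset.sum_congr rfl
    intro c _
    simp only [hM, hZ]
    by_cases h1 : p ≤ c <;> by_cases h2 : c ≤ q <;> simp [h1, h2]
  have hZM : Z * M = 1 := mul_eq_one_comm.mp hMZ
  have := congrFun (congrFun hZM a) b
  rw [Matrix.mul_apply, Matrix.one_apply] at this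
  rw [← this]
  apply Finset.sum_congr rfl
  intro c _
  simp only [hM, hZ]
  by_cases h1 : a ≤ c <;> by_cases h2 : c ≤ b <;> simp [h1, h2]

/-- Weisner-type claim: for any `b`,
`∑_{a : a ⊔ (x ⊓ b) = b} μ(⊥, a) = [x ⊓ b = ⊥] · μ(⊥, b)`. -/
lemma claim1 (x b : L) :
    (∑ a : L, if a ⊔ (x ⊓ b) = b then mu ⊥ a else 0) =
      if x ⊓ b = ⊥ then mu ⊥ b else 0 := by
  classical
  set c : L := x ⊓ b with hc
  -- the double sum
  have key : (∑ y : L, ∑ a : L, if y ≤ b ∧ a ⊔ c ≤ y then mu y b * mu ⊥ a else 0) =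
      (∑ a : L, if a ⊔ c = b then mu ⊥ a else 0) := by
    rw [Finset.sum_comm]
    apply Finset.sum_congr rfl
    intro a _
    have : (∑ y : L, if y ≤ b ∧ a ⊔ c ≤ y then mu y b * mu ⊥ a else 0) =
        (∑ y : L, if a ⊔ c ≤ y ∧ y ≤ b then mu y b else 0) * mu ⊥ a := by
      rw [Finset.sum_mul]
      apply Finset.sum_congr rfl
      intro y _
      by_cases h1 : y ≤ b <;> by_cases h2 : a ⊔ c ≤ y <;> simp [h1, h2]
    rw [this, mu_dual mu hmu]
    by_cases h : a ⊔ c = b <;> simp [h]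
  -- evaluate the double sum the other way
  have key2 : (∑ y : L, ∑ a : L, if y ≤ b ∧ a ⊔ c ≤ y then mu y b * mu ⊥ a else 0) =
      if c = ⊥ then mu ⊥ b else 0 := by
    have hinner : ∀ y : L, (∑ a : L, if y ≤ b ∧ a ⊔ c ≤ y then mu y b * mu ⊥ a else 0) =
        if y ≤ b ∧ c ≤ y then mu y b * (if ⊥ = y then 1 else 0) else 0 := by
      intro y
      by_cases h1 : y ≤ b
      · by_cases h2 : c ≤ y
        · rw [if_pos ⟨h1, h2⟩]
          rw [← mu_left_ite mu hmu ⊥ y, Finset.mul_sum]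
          apply Finset.sum_congr rfl
          intro a _
          have : a ⊔ c ≤ y ↔ (⊥ ≤ a ∧ a ≤ y) := by
            constructor
            · intro h; exact ⟨bot_le, le_trans le_sup_left h⟩
            · intro h; exact sup_le h.2 h2
          by_cases h3 : a ⊔ c ≤ y
          · rw [if_pos ⟨h1, h3⟩, if_pos (this.mp h3)]
          · rw [if_neg (fun hh => h3 hh.2), if_neg (fun hh => h3 (this.mpr hh)), mul_zero]
        · rw [if_neg (fun hh => h2 hh.2)]
          apply Finset.sum_eq_zero
          intro a _
          apply if_neg
          rintro ⟨-, hh⟩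
          exact h2 (le_trans le_sup_right hh)
      · rw [if_neg (fun hh => h1 hh.1)]
        apply Finset.sum_eq_zero
        intro a _
        exact if_neg (fun hh => h1 hh.1)
    rw [Finset.sum_congr rfl (fun y _ => hinner y)]
    rw [Finset.sum_eq_single ⊥]
    · have : (⊥:L) ≤ b ∧ (c ≤ (⊥:L) ↔ c = ⊥) := ⟨bot_le, le_bot_iff⟩
      by_cases h : c = ⊥
      · rw [if_pos ⟨bot_le, h ▸ le_refl c⟩, if_pos rfl, mul_one, if_pos h]
      · rw [if_neg h, if_neg (fun hh => h (le_bot_iff.mp hh.2))]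
    · intro y _ hy
      by_cases h1 : y ≤ b ∧ c ≤ y
      · rw [if_pos h1, if_neg (fun hh => hy hh.symm), mul_zero]
      · exact if_neg h1
    · intro h; exact absurd (Finset.mem_univ ⊥) h
  rw [← key, key2]

end Aux

/-- Let L be a finite lattice and x ∈ L left-modular.  Then
μ(⊥,⊤) = Σ_b μ(⊥,b)·μ(b,⊤), the sum being over all complements b of x, i.e. all
b ∈ L with b ∧ x = ⊥ and b ∨ x = ⊤.  Here `mu` is the Möbius function of L. -/
theorem moebius_top_eq_sum_complements {L : Type*} [Lattice L] [Fintype L] [BoundedOrder L]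
    (mu : L → L → ℤ)
    (hmu : ∀ a b : L, a ≤ b →
      (∑ c ∈ Finset.univ.filter (fun c => a ≤ c ∧ c ≤ b), mu a c) =
        if a = b then 1 else 0)
    (x : L) (hx : LeftModular x) :
    mu ⊥ ⊤ = ∑ b ∈ Finset.univ.filter (fun b : L => b ⊓ x = ⊥ ∧ b ⊔ x = ⊤),
        mu ⊥ b * mu b ⊤ := by
  classical
  -- the key condition equivalence, using left-modularity
  have hcond : ∀ a b : L, (b ⊔ x = ⊤ ∧ a ⊔ (x ⊓ b) = b) ↔ (a ⊔ x = ⊤ ∧ a ≤ b) := by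
    intro a b
    constructor
    · rintro ⟨h1, h2⟩
      have hab : a ≤ b := h2 ▸ le_sup_left
      rcases eq_or_lt_of_le hab with heq | hlt
      · exact ⟨heq ▸ h1, hab⟩
      · have hlm := hx a b hlt
        rw [hlm] at h2
        have hb : b ≤ a ⊔ x := by
          conv_lhs => rw [← h2]; rfl
          exact inf_le_left
        refine ⟨?_, hab⟩
        have : (⊤:L) ≤ a ⊔ x := by
          rw [← h1]
          exact sup_le (hb.trans le_rfl) le_sup_right
        exact le_antisymm le_top this
    · rintro ⟨h1, h2⟩
      constructor
      · have : (⊤:L) ≤ b ⊔ x := h1 ▸ sup_le_sup_right h2 x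
        exact le_antisymm le_top this
      · rcases eq_or_lt_of_le h2 with heq | hlt
        · subst heq
          rw [inf_comm, sup_inf_self]
        · rw [hx a b hlt, h1, top_inf_eq]
  -- rewrite RHS using claim1
  rw [Finset.sum_filter]
  have step1 : (∑ b : L, if b ⊓ x = ⊥ ∧ b ⊔ x = ⊤ then mu ⊥ b * mu b ⊤ else 0) =
      ∑ b : L, (if b ⊔ x = ⊤ then (if x ⊓ b = ⊥ then mu ⊥ b else 0) * mu b ⊤ else 0) := by
    apply Finset.sum_congr rfl
    intro b _
    by_cases h1 : b ⊔ x = ⊤ <;> by_cases h2 : b ⊓ x = ⊥ <;>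
      simp [h1, h2, inf_comm x b]
  have step2 : (∑ b : L, (if b ⊔ x = ⊤ then (if x ⊓ b = ⊥ then mu ⊥ b else 0) * mu b ⊤ else 0)) =
      ∑ b : L, ∑ a : L, (if b ⊔ x = ⊤ ∧ a ⊔ (x ⊓ b) = b then mu ⊥ a * mu b ⊤ else 0) := by
    apply Finset.sum_congr rfl
    intro b _
    rw [← claim1 mu hmu x b]
    by_cases h1 : b ⊔ x = ⊤
    · rw [if_pos h1, Finset.sum_mul]
      apply Finset.sum_congr rfl
      intro a _
      by_cases h2 : a ⊔ (x ⊓ b) = b <;> simp [h1, h2]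
    · rw [if_neg h1]
      rw [eq_comm]
      apply Finset.sum_eq_zero
      intro a _
      exact if_neg (fun hh => h1 hh.1)
  have step3 : (∑ b : L, ∑ a : L, (if b ⊔ x = ⊤ ∧ a ⊔ (x ⊓ b) = b then mu ⊥ a * mu b ⊤ else 0)) =
      ∑ a : L, (if a ⊔ x = ⊤ then mu ⊥ a * (if a = ⊤ then 1 else 0) else 0) := by
    rw [Finset.sum_comm]
    apply Finset.sum_congr rfl
    intro a _
    have : (∑ b : L, if b ⊔ x = ⊤ ∧ a ⊔ (x ⊓ b) = b then mu ⊥ a * mu b ⊤ else 0) =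
        (if a ⊔ x = ⊤ then mu ⊥ a * (∑ b : L, if a ≤ b ∧ b ≤ ⊤ then mu b ⊤ else 0) else 0) := by
      by_cases h : a ⊔ x = ⊤
      · rw [if_pos h, Finset.mul_sum]
        apply Finset.sum_congr rfl
        intro b _
        rw [if_congr (hcond a b) rfl rfl]
        by_cases h2 : a ≤ b
        · rw [if_pos ⟨h, h2⟩, if_pos ⟨h2, le_top⟩]
        · rw [if_neg (fun hh => h2 hh.2), if_neg (fun hh => h2 hh.1), mul_zero]
      · rw [if_neg h]
        apply Finset.sum_eq_zero
        intro b _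
        rw [if_congr (hcond a b) rfl rfl]
        exact if_neg (fun hh => h hh.1)
    rw [this, mu_dual mu hmu a ⊤]
  rw [step1, step2, step3]
  rw [Finset.sum_eq_single ⊤]
  · rw [if_pos (sup_eq_left.mpr le_top : (⊤:L) ⊔ x = ⊤), if_pos rfl, mul_one]
  · intro a _ ha
    by_cases h : a ⊔ x = ⊤
    · rw [if_pos h, if_neg ha, mul_zero]
    · exact if_neg h
  · intro h; exact absurd (Finset.mem_univ ⊤) h
end

section
/- Let x be a left-modular element of a lattice L and b ∈ L with b ∧ x = ⊥. Then the map τ_b : [⊥, x] → [b, b ∨ x] given by τ_b(v) = v ∨ b is surjective, with σ_x(y) = y ∧ x giving the maximal element of each fiber τ_b⁻¹(y); in particular τ_b(σ_x(y)) = y for all y ∈ [b, b ∨ x]. -/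
/-- Let x be a left-modular element of a lattice L and b ∈ L with
b ∧ x = ⊥.  Then the map τ_b : [⊥,x] → [b, b∨x], τ_b(v) = v ∨ b is surjective, with
σ_x(y) = y ∧ x giving the maximal element of each fiber τ_b⁻¹(y); in particular
τ_b(σ_x(y)) = y for all y ∈ [b, b∨x]. -/
theorem tau_b_surjective {L : Type*} [Lattice L] [OrderBot L]
    (x : L) (hx : LeftModular x) (b : L) (hb : b ⊓ x = ⊥) :
    ∀ y : L, b ≤ y → y ≤ b ⊔ x →
      (y ⊓ x) ⊔ b = y ∧ ∀ v : L, v ≤ x → v ⊔ b = y → v ≤ y ⊓ x := by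
  intro y hby hybx
  constructor
  · rcases eq_or_lt_of_le hby with h | h
    · rw [← h, hb]; simp
    · have := hx b y h
      rw [inf_comm x y] at this
      rw [sup_comm]
      rw [this, inf_eq_right.mpr hybx]
  · intro v hvx hvb
    exact le_inf (hvb ▸ le_sup_left) hvx
end

section
/- For n ≥ 4, the partition π with unique non-singleton block {1,…,n−1} is not a modular element of NC_n: taking σ with block {2,n} and φ with blocks {1,n−1} and {2,3,…,n−2}, one has φ < π, π ∧ σ = φ ∧ σ = ⊥ and π ∨ σ = φ ∨ σ = ⊤ in NC_n, so (σ,π) is not a modular pair. -/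
/-! The meet of `σ` with `π` or `φ` is the discrete partition, because no two distinct points
are related both by `σ` and by `π`. The join of `σ` with `π` is the full partition outright; the join
of `σ` with `φ` is full because a non-crossing partition containing the blocks `{0, n−2}` of `φ` and
`{1, n−1}` of `σ` (0-indexed) must merge them. Taking `z = φ` in the modular law then gives
`φ ∨ ⊥ = φ` on the left and `⊤ ∧ π = π` on the right. -/

/-- A partition (equivalence relation) of `Fin n` is non-crossing if there are no
`i < j < k < l` with `i ∼ k`, `j ∼ l` but `i ≁ j`. -/
def Noncrossing {n : ℕ} (s : Setoid (Fin n)) : Prop :=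
  ¬ ∃ i j k l : Fin n, i < j ∧ j < k ∧ k < l ∧ s.r i k ∧ s.r j l ∧ ¬ s.r i j

/-- The lattice `NC n` of non-crossing partitions of `{1,…,n}` (modelled on `Fin n`),
ordered by refinement (the order inherited from the lattice of all partitions). -/
def NC (n : ℕ) := {s : Setoid (Fin n) // Noncrossing s}

instance (n : ℕ) : PartialOrder (NC n) :=
  inferInstanceAs (PartialOrder {s : Setoid (Fin n) // Noncrossing s})

/-- The partition of `{1,…,n}` whose only non-singleton block is `{1,…,n−1}`
(in `Fin n`: the block of all elements with value `< n - 1`). -/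
def ncPiRel (n : ℕ) : Setoid (Fin n) :=
  ⟨fun i j => (i : ℕ) = j ∨ ((i : ℕ) < n - 1 ∧ (j : ℕ) < n - 1),
   ⟨fun i => Or.inl rfl, fun h => by omega, fun h1 h2 => by omega⟩⟩

theorem ncPiRel_noncrossing (n : ℕ) : Noncrossing (ncPiRel n) := by
  rintro ⟨i, j, k, l, hij, hjk, hkl, hik, hjl, hnij⟩
  simp only [Fin.lt_def] at hij hjk hkl
  unfold ncPiRel at hik hjl hnij
  dsimp only at hik hjl hnij
  omega

/-- `π = 12⋯(n−1)` as an element of `NC n`. -/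
def ncPi (n : ℕ) : NC n := ⟨ncPiRel n, ncPiRel_noncrossing n⟩

/-- The partition `σ` of `{1,…,n}` whose only non-singleton block is `{2, n}`
(in `Fin n`: values `1` and `n − 1`). -/
def ncSigmaRel (n : ℕ) : Setoid (Fin n) :=
  ⟨fun i j => (i : ℕ) = j ∨ ((i : ℕ) = 1 ∧ (j : ℕ) = n - 1) ∨
      ((i : ℕ) = n - 1 ∧ (j : ℕ) = 1),
   ⟨fun i => Or.inl rfl, fun h => by omega, fun h1 h2 => by omega⟩⟩

theorem ncSigmaRel_noncrossing (n : ℕ) : Noncrossing (ncSigmaRel n) := by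
  rintro ⟨i, j, k, l, hij, hjk, hkl, hik, hjl, hnij⟩
  simp only [Fin.lt_def] at hij hjk hkl
  unfold ncSigmaRel at hik hjl hnij
  dsimp only at hik hjl hnij
  have := l.isLt
  omega

/-- `σ = 2n` as an element of `NC n`. -/
def ncSigma (n : ℕ) : NC n := ⟨ncSigmaRel n, ncSigmaRel_noncrossing n⟩

/-- The partition `φ` of `{1,…,n}` with non-singleton blocks `{1, n−1}` and
`{2, 3, …, n−2}` (in `Fin n`: the blocks `{0, n−2}` and `{1, …, n−3}`). -/
def ncPhiRel (n : ℕ) : Setoid (Fin n) :=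
  ⟨fun i j => (i : ℕ) = j ∨ ((i : ℕ) = 0 ∧ (j : ℕ) = n - 2) ∨
      ((i : ℕ) = n - 2 ∧ (j : ℕ) = 0) ∨
      (1 ≤ (i : ℕ) ∧ (i : ℕ) ≤ n - 3 ∧ 1 ≤ (j : ℕ) ∧ (j : ℕ) ≤ n - 3),
   ⟨fun i => Or.inl rfl, fun h => by omega, fun h1 h2 => by omega⟩⟩

theorem ncPhiRel_noncrossing (n : ℕ) : Noncrossing (ncPhiRel n) := by
  rintro ⟨i, j, k, l, hij, hjk, hkl, hik, hjl, hnij⟩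
  simp only [Fin.lt_def] at hij hjk hkl
  unfold ncPhiRel at hik hjl hnij
  dsimp only at hik hjl hnij
  have := l.isLt
  omega

/-- `φ = 1(n−1)/23⋯(n−2)` as an element of `NC n`. -/
def ncPhi (n : ℕ) : NC n := ⟨ncPhiRel n, ncPhiRel_noncrossing n⟩

namespace NC

variable {n : ℕ}

theorem le_iff {a b : NC n} : a ≤ b ↔ ∀ x y : Fin n, a.1.r x y → b.1.r x y := Iff.rfl

theorem le_of_forall_eq {a b : NC n} (ha : ∀ x y : Fin n, a.1.r x y → x = y) : a ≤ b :=
  le_iff.2 fun x y hxy => ha x y hxy ▸ b.1.refl x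

theorem le_of_forall_r {a b : NC n} (hb : ∀ x y : Fin n, b.1.r x y) : a ≤ b :=
  le_iff.2 fun x y _ => hb x y

theorem isGLB_of_forall_eq {s : Set (NC n)} {bot : NC n} (hbot : ∀ w, bot ≤ w)
    (hs : ∀ w ∈ lowerBounds s, ∀ x y : Fin n, w.1.r x y → x = y) : IsGLB s bot :=
  ⟨fun w _ => hbot w, fun w hw => le_of_forall_eq (hs w hw)⟩

theorem isLUB_of_forall_r {s : Set (NC n)} {top : NC n} (htop : ∀ w, w ≤ top)
    (hs : ∀ w ∈ upperBounds s, ∀ x y : Fin n, w.1.r x y) : IsLUB s top :=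
  ⟨fun w _ => htop w, fun w hw => le_of_forall_r (hs w hw)⟩

end NC

theorem Setoid.r_of_forall_r {α : Type*} (s : Setoid α) {c : α} (h : ∀ z, s.r z c) (x y : α) :
    s.r x y :=
  s.trans (h x) (s.symm (h y))

theorem ncPhi_le_ncPi (n : ℕ) : ncPhi n ≤ ncPi n := by
  refine NC.le_iff.2 fun x y hxy => ?_
  change (ncPhiRel n).r x y at hxy
  change (ncPiRel n).r x y
  unfold ncPhiRel at hxy
  unfold ncPiRel
  dsimp only at hxy ⊢
  omega

theorem ncPhi_lt_ncPi {n : ℕ} (hn : 4 ≤ n) : ncPhi n < ncPi n := by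
  refine lt_of_le_not_ge (ncPhi_le_ncPi n) fun h => ?_
  have h01 := NC.le_iff.1 h ⟨0, by omega⟩ ⟨1, by omega⟩
    (Or.inr ⟨show 0 < n - 1 by omega, show 1 < n - 1 by omega⟩)
  change (ncPhiRel n).r _ _ at h01
  unfold ncPhiRel at h01
  dsimp only at h01
  omega

theorem eq_of_ncPiRel_of_ncSigmaRel {n : ℕ} {x y : Fin n} (hπ : (ncPiRel n).r x y)
    (hσ : (ncSigmaRel n).r x y) : x = y := by
  unfold ncPiRel at hπ
  unfold ncSigmaRel at hσ
  dsimp only at hπ hσ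
  exact Fin.ext (by omega)

theorem eq_of_le_ncPi_of_le_ncSigma {n : ℕ} {w : NC n} (hπ : w ≤ ncPi n) (hσ : w ≤ ncSigma n)
    {x y : Fin n} (hxy : w.1.r x y) : x = y :=
  eq_of_ncPiRel_of_ncSigmaRel (NC.le_iff.1 hπ x y hxy) (NC.le_iff.1 hσ x y hxy)

theorem r_of_ncPi_le_of_ncSigma_le {n : ℕ} (hn : 3 ≤ n) {w : NC n} (hπ : ncPi n ≤ w)
    (hσ : ncSigma n ≤ w) (x y : Fin n) : w.1.r x y := by
  let e0 : Fin n := ⟨0, by omega⟩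
  let e1 : Fin n := ⟨1, by omega⟩
  have hπ' : ∀ z : Fin n, (z : ℕ) < n - 1 → w.1.r z e0 := fun z hz =>
    NC.le_iff.1 hπ z e0 (Or.inr ⟨hz, show 0 < n - 1 by omega⟩)
  refine w.1.r_of_forall_r (c := e0) (fun z => ?_) x y
  rcases Nat.lt_or_ge z (n - 1) with hz | hz
  · exact hπ' z hz
  · have hz1 : w.1.r z e1 := NC.le_iff.1 hσ z e1 (Or.inr (Or.inr ⟨by omega, rfl⟩))
    exact w.1.trans hz1 (hπ' e1 (show 1 < n - 1 by omega))

theorem r_of_ncPhi_le_of_ncSigma_le {n : ℕ} (hn : 4 ≤ n) {w : NC n} (hφ : ncPhi n ≤ w)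
    (hσ : ncSigma n ≤ w) (x y : Fin n) : w.1.r x y := by
  let e0 : Fin n := ⟨0, by omega⟩
  let e1 : Fin n := ⟨1, by omega⟩
  let e2 : Fin n := ⟨n - 2, by omega⟩
  let e3 : Fin n := ⟨n - 1, by omega⟩
  have h02 : w.1.r e0 e2 := NC.le_iff.1 hφ e0 e2 (Or.inr (Or.inl ⟨rfl, rfl⟩))
  have h13 : w.1.r e1 e3 := NC.le_iff.1 hσ e1 e3 (Or.inr (Or.inl ⟨rfl, rfl⟩))
  have h01 : w.1.r e0 e1 := by
    by_contra h
    exact w.2 ⟨e0, e1, e2, e3, Fin.mk_lt_mk.2 (by omega), Fin.mk_lt_mk.2 (by omega),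
      Fin.mk_lt_mk.2 (by omega), h02, h13, h⟩
  refine w.1.r_of_forall_r (c := e1) (fun z => ?_) x y
  have hz := z.isLt
  by_cases hmid : 1 ≤ (z : ℕ) ∧ (z : ℕ) ≤ n - 3
  · exact NC.le_iff.1 hφ z e1
      (Or.inr (Or.inr (Or.inr ⟨hmid.1, hmid.2, le_rfl, show 1 ≤ n - 3 by omega⟩)))
  · obtain rfl | rfl | rfl : z = e0 ∨ z = e2 ∨ z = e3 := by
      simp only [e0, e2, e3, Fin.ext_iff]
      omega
    · exact h01
    · exact w.1.trans (w.1.symm h02) h01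
    · exact w.1.symm h13

/-- For n ≥ 4, the partition π with unique non-singleton block
{1,…,n−1} is not a modular element of NC_n: with σ = 2n and φ = 1(n−1)/23⋯(n−2),
one has φ < π, π ∧ σ = φ ∧ σ = ⊥ and π ∨ σ = φ ∨ σ = ⊤ in NC_n, so (σ,π) is not a
modular pair (where (σ,π) is a modular pair if z ∨ (σ ∧ π) = (z ∨ σ) ∧ π for all
z < π). -/
theorem ncPi_not_modular (n : ℕ) (hn : 4 ≤ n)
    (inf sup : NC n → NC n → NC n)
    (hinf : ∀ a b : NC n, IsGLB {a, b} (inf a b))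
    (hsup : ∀ a b : NC n, IsLUB {a, b} (sup a b))
    (bot top : NC n) (hbot : ∀ w : NC n, bot ≤ w) (htop : ∀ w : NC n, w ≤ top) :
    ncPhi n < ncPi n ∧
      inf (ncPi n) (ncSigma n) = bot ∧ inf (ncPhi n) (ncSigma n) = bot ∧
      sup (ncPi n) (ncSigma n) = top ∧ sup (ncPhi n) (ncSigma n) = top ∧
      ¬ (∀ z : NC n, z < ncPi n →
          sup z (inf (ncSigma n) (ncPi n)) = inf (sup z (ncSigma n)) (ncPi n)) := by
  have hφπ := ncPhi_lt_ncPi hn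
  have hmeet : ∀ a ≤ ncPi n, inf a (ncSigma n) = bot := fun a ha =>
    (hinf _ _).unique <| NC.isGLB_of_forall_eq hbot fun w hw x y =>
      eq_of_le_ncPi_of_le_ncSigma ((hw (Set.mem_insert _ _)).trans ha)
        (hw (Set.mem_insert_of_mem _ rfl))
  have hmeet' : inf (ncSigma n) (ncPi n) = bot := by
    rw [← hmeet (ncPi n) le_rfl]
    exact (hinf _ _).unique (Set.pair_comm _ _ ▸ hinf _ _)
  have hjoin : ∀ a, (∀ w, a ≤ w → ncSigma n ≤ w → ∀ x y : Fin n, w.1.r x y) →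
      sup a (ncSigma n) = top := fun a ha =>
    (hsup _ _).unique <| NC.isLUB_of_forall_r htop fun w hw =>
      ha w (hw (Set.mem_insert _ _)) (hw (Set.mem_insert_of_mem _ rfl))
  have hjoinφ := hjoin _ fun _ => r_of_ncPhi_le_of_ncSigma_le hn
  refine ⟨hφπ, hmeet _ le_rfl, hmeet _ hφπ.le,
    hjoin _ fun _ => r_of_ncPi_le_of_ncSigma_le (by omega), hjoinφ, fun hmod => ?_⟩
  have h := hmod (ncPhi n) hφπ
  rw [hmeet', hjoinφ] at h
  have hφ : sup (ncPhi n) bot ≤ ncPhi n := (hsup _ _).2 (by rintro w (rfl | rfl) <;> simp [hbot])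
  have hπ : ncPi n ≤ inf top (ncPi n) := (hinf _ _).2 (by rintro w (rfl | rfl) <;> simp [htop])
  exact hφπ.not_ge (hπ.trans (h ▸ hφ))
end
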